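/- The Gibbs density is a stationary solution of the Fokker–Planck equation associated with the SGHMC dynamics with friction: let U : ℝ^p → ℝ be twice continuously differentiable, M a symmetric positive definite p×p real matrix, and C a symmetric positive semidefinite p×p real matrix. Define ρ : ℝ^p × ℝ^p → ℝ by ρ(θ,r) = exp(−U(θ) − (1/2)⟨r, M⁻¹ r⟩) and the drift b(θ,r) = (M⁻¹ r, −∇U(θ) − C M⁻¹ r). Then at every point (θ,r), the divergence of the vector field ρ·b equals Σ_{i,j=1}^p C_{ij} · ∂²ρ/∂r_i ∂r_j (θ,r); that is, ρ satisfies the stationary Fokker–Planck equation 0 = −div(ρ b) + Σ_{i,j} C_{ij} ∂²_{r_i r_j} ρ of the Langevin dynamics dθ = M⁻¹ r dt, dr = −∇U(θ) dt − C M⁻¹ r dt + √(2C) dW. -/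

import Mathlib

open scoped RealInnerProductSpace Matrix
open ContinuousLinearMap

section Aux
variable {p : ℕ}
local notation "E" => EuclideanSpace ℝ (Fin p)

/-- Derivative of the Gibbs density. -/
lemma gibbs_hasFDerivAt (U : E → ℝ) (hU : Differentiable ℝ U)
    (A : E →L[ℝ] E) (hA : ∀ v w : E, ⟪v, A w⟫ = ⟪A v, w⟫)
    (ρ : E × E → ℝ)
    (hρ : ∀ x : E × E, ρ x = Real.exp (-(U x.1) - (1 / 2) * ⟪x.2, A x.2⟫))
    (x : E × E) :
    HasFDerivAt ρ
      (ρ x • (-((fderiv ℝ U x.1).comp (fst ℝ E E)) -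
        (innerSL ℝ (A x.2)).comp (snd ℝ E E))) x := by
  have hF : HasFDerivAt (fun y : E × E => -(U y.1) - (1 / 2) * ⟪y.2, A y.2⟫)
      (-((fderiv ℝ U x.1).comp (fst ℝ E E)) - (innerSL ℝ (A x.2)).comp (snd ℝ E E)) x := by
    have h1 : HasFDerivAt (fun y : E × E => U y.1)
        ((fderiv ℝ U x.1).comp (fst ℝ E E)) x :=
      (hU x.1).hasFDerivAt.comp x (hasFDerivAt_fst)
    have h2 : HasFDerivAt (fun y : E × E => ⟪y.2, A y.2⟫)
        ((fderivInnerCLM ℝ (x.2, A x.2)).comp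
          ((snd ℝ E E).prod (A.comp (snd ℝ E E)))) x :=
      (hasFDerivAt_snd).inner ℝ ((A.comp (snd ℝ E E)).hasFDerivAt)
    have h3 : HasFDerivAt (fun y : E × E => -(U y.1) - (1 / 2) * ⟪y.2, A y.2⟫) _ x :=
      (h1.neg).sub ((h2.const_mul (1/2 : ℝ)))
    refine h3.congr_fderiv ?_
    refine ContinuousLinearMap.ext fun vw => ?_
    obtain ⟨v, w⟩ := vw
    simp only [ContinuousLinearMap.comp_apply, ContinuousLinearMap.sub_apply,
      ContinuousLinearMap.neg_apply, ContinuousLinearMap.smul_apply,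
      ContinuousLinearMap.prod_apply, ContinuousLinearMap.coe_fst',
      ContinuousLinearMap.coe_snd', ContinuousLinearMap.inr_apply,
      fderivInnerCLM_apply, innerSL_apply_apply, smul_eq_mul, ContinuousLinearMap.inl_apply]
    rw [real_inner_comm w (A x.2), hA, real_inner_comm w (A x.2)]
    ring
  have hfun : ρ = fun y : E × E => Real.exp (-(U y.1) - (1 / 2) * ⟪y.2, A y.2⟫) :=
    funext hρ
  have := hF.exp
  rw [← hfun, ← hρ x] at this
  exact this

lemma trace_prod_formula (T : (E × E) →ₗ[ℝ] (E × E)) :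
    LinearMap.trace ℝ (E × E) T =
      (∑ i : Fin p, (T (EuclideanSpace.single i 1, 0)).1 i)
      + ∑ i : Fin p, (T (0, EuclideanSpace.single i 1)).2 i := by
  classical
  set b0 := (EuclideanSpace.basisFun (Fin p) ℝ).toBasis
  set b := b0.prod b0 with hb
  rw [LinearMap.trace_eq_matrix_trace ℝ b, Matrix.trace]
  rw [Fintype.sum_sum_type]
  have hinl : ∀ i, b (Sum.inl i) = (EuclideanSpace.single i 1, 0) := by
    intro i
    refine Prod.ext ?_ ?_
    · rw [Module.Basis.prod_apply_inl_fst]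
      simp [b0, EuclideanSpace.basisFun_apply]
    · rw [Module.Basis.prod_apply_inl_snd]
  have hinr : ∀ i, b (Sum.inr i) = (0, EuclideanSpace.single i 1) := by
    intro i
    refine Prod.ext ?_ ?_
    · rw [Module.Basis.prod_apply_inr_fst]
    · rw [Module.Basis.prod_apply_inr_snd]
      simp [b0, EuclideanSpace.basisFun_apply]
  congr 1
  · refine Finset.sum_congr rfl fun i _ => ?_
    rw [Matrix.diag_apply, LinearMap.toMatrix_apply, hinl i, Module.Basis.prod_repr_inl]
    simp [b0, EuclideanSpace.basisFun_repr]
  · refine Finset.sum_congr rfl fun i _ => ?_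
    rw [Matrix.diag_apply, LinearMap.toMatrix_apply, hinr i, Module.Basis.prod_repr_inr]
    simp [b0, EuclideanSpace.basisFun_repr]

end Aux

/-- The Gibbs density `ρ(θ, r) = exp(−U(θ) − (1/2)⟨r, M⁻¹ r⟩)` is a stationary
solution of the Fokker–Planck equation for the SGHMC Langevin dynamics with
friction: at every point, the divergence (trace of the total derivative) of the
vector field `ρ·b`, with drift `b(θ, r) = (M⁻¹ r, −∇U(θ) − C M⁻¹ r)`, equals
`Σ_{i,j} C_{ij} ∂²ρ/∂r_i∂r_j`. -/
theorem gibbs_density_stationary_fokker_planck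
    {p : ℕ} (U : EuclideanSpace ℝ (Fin p) → ℝ) (hU : ContDiff ℝ 2 U)
    (M : Matrix (Fin p) (Fin p) ℝ) (hMsymm : M.IsSymm) (hMpd : M.PosDef)
    (C : Matrix (Fin p) (Fin p) ℝ) (hC : C.PosSemidef)
    (ρ : EuclideanSpace ℝ (Fin p) × EuclideanSpace ℝ (Fin p) → ℝ)
    (hρ : ∀ x : EuclideanSpace ℝ (Fin p) × EuclideanSpace ℝ (Fin p),
      ρ x = Real.exp (-(U x.1) - (1 / 2) * ⟪x.2, Matrix.toEuclideanLin M⁻¹ x.2⟫))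
    (b : EuclideanSpace ℝ (Fin p) × EuclideanSpace ℝ (Fin p) →
      EuclideanSpace ℝ (Fin p) × EuclideanSpace ℝ (Fin p))
    (hb : ∀ x : EuclideanSpace ℝ (Fin p) × EuclideanSpace ℝ (Fin p),
      b x = (Matrix.toEuclideanLin M⁻¹ x.2,
        -(gradient U x.1) - Matrix.toEuclideanLin (C * M⁻¹) x.2)) :
    ∀ x : EuclideanSpace ℝ (Fin p) × EuclideanSpace ℝ (Fin p),
      LinearMap.trace ℝ (EuclideanSpace ℝ (Fin p) × EuclideanSpace ℝ (Fin p))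
          (fderiv ℝ (fun y => ρ y • b y) x).toLinearMap
        = ∑ i : Fin p, ∑ j : Fin p, C i j *
            fderiv ℝ
              (fun y : EuclideanSpace ℝ (Fin p) × EuclideanSpace ℝ (Fin p) =>
                fderiv ℝ ρ y (0, EuclideanSpace.single j (1 : ℝ)))
              x (0, EuclideanSpace.single i (1 : ℝ)) := by
  classical
  intro x
  -- continuous linear maps for the matrices
  set A : EuclideanSpace ℝ (Fin p) →L[ℝ] EuclideanSpace ℝ (Fin p) :=
    LinearMap.toContinuousLinearMap (Matrix.toEuclideanLin M⁻¹) with hAdef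
  set K : EuclideanSpace ℝ (Fin p) →L[ℝ] EuclideanSpace ℝ (Fin p) :=
    LinearMap.toContinuousLinearMap (Matrix.toEuclideanLin (C * M⁻¹)) with hKdef
  have hAapp : ∀ v : EuclideanSpace ℝ (Fin p), A v = Matrix.toEuclideanLin M⁻¹ v := fun v => rfl
  have hKapp : ∀ v : EuclideanSpace ℝ (Fin p), K v = Matrix.toEuclideanLin (C * M⁻¹) v :=
    fun v => rfl
  -- symmetry of M⁻¹
  have hMinvSymm : (M⁻¹)ᵀ = M⁻¹ := by
    rw [Matrix.transpose_nonsing_inv, hMsymm.eq]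
  have hA : ∀ v w : EuclideanSpace ℝ (Fin p), ⟪v, A w⟫ = ⟪A v, w⟫ := by
    intro v w
    have h1 : Matrix.toEuclideanLin (M⁻¹)ᴴ = LinearMap.adjoint (Matrix.toEuclideanLin M⁻¹) :=
      Matrix.toEuclideanLin_conjTranspose_eq_adjoint M⁻¹
    have h2 : (M⁻¹)ᴴ = M⁻¹ := by
      rw [Matrix.conjTranspose_eq_transpose_of_trivial, hMinvSymm]
    rw [hAapp, hAapp, ← LinearMap.adjoint_inner_left, ← h1, h2]
  have hUdiff : Differentiable ℝ U := hU.differentiable (by norm_num)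
  -- the derivative of ρ at any point
  have hρ' : ∀ y : EuclideanSpace ℝ (Fin p) × EuclideanSpace ℝ (Fin p),
      HasFDerivAt ρ (ρ y • (-((fderiv ℝ U y.1).comp
          (fst ℝ (EuclideanSpace ℝ (Fin p)) (EuclideanSpace ℝ (Fin p)))) -
        (innerSL ℝ (A y.2)).comp
          (snd ℝ (EuclideanSpace ℝ (Fin p)) (EuclideanSpace ℝ (Fin p))))) y := by
    intro y
    exact gibbs_hasFDerivAt U hUdiff A hA ρ (by intro z; rw [hρ z, hAapp]) y
  -- gradient of U is differentiable
  have hgradU : Differentiable ℝ (gradient U) := by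
    have h2 : Differentiable ℝ (fderiv ℝ U) := (hU.fderiv_right (m := 1) (by norm_num)).differentiable (by norm_num)
    let Gmap : (EuclideanSpace ℝ (Fin p) →L[ℝ] ℝ) →ₗ[ℝ] EuclideanSpace ℝ (Fin p) :=
      { toFun := fun f =>
          (WithLp.equiv 2 (Fin p → ℝ)).symm (fun i => f (EuclideanSpace.single i 1))
        map_add' := by
          intro f g; ext i
          simp [WithLp.equiv_symm_apply, PiLp.add_apply]
        map_smul' := by
          intro c f; ext i
          simp [WithLp.equiv_symm_apply, PiLp.smul_apply] }
    let Gmapc : (EuclideanSpace ℝ (Fin p) →L[ℝ] ℝ) →L[ℝ] EuclideanSpace ℝ (Fin p) :=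
      LinearMap.toContinuousLinearMap Gmap
    have hgeq : gradient U = fun θ => Gmapc (fderiv ℝ U θ) := by
      funext θ
      ext i
      have h1 : (gradient U θ) i = ⟪gradient U θ, EuclideanSpace.single i (1:ℝ)⟫ := by
        rw [EuclideanSpace.inner_single_right]; simp
      rw [h1]
      have h2' : ⟪gradient U θ, EuclideanSpace.single i (1:ℝ)⟫
          = fderiv ℝ U θ (EuclideanSpace.single i 1) := InnerProductSpace.toDual_symm_apply
      rw [h2']
      rfl
    rw [hgeq]
    exact Gmapc.differentiable.comp h2
  set H : EuclideanSpace ℝ (Fin p) →L[ℝ] EuclideanSpace ℝ (Fin p) :=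
    fderiv ℝ (gradient U) x.1 with hHdef
  set F2 := fst ℝ (EuclideanSpace ℝ (Fin p)) (EuclideanSpace ℝ (Fin p)) with hF2
  set S2 := snd ℝ (EuclideanSpace ℝ (Fin p)) (EuclideanSpace ℝ (Fin p)) with hS2
  have hbD : HasFDerivAt b ((A.comp S2).prod (-(H.comp F2) - K.comp S2)) x := by
    have hfun : b = fun y : EuclideanSpace ℝ (Fin p) × EuclideanSpace ℝ (Fin p) =>
        (A y.2, -(gradient U y.1) - K y.2) := by
      funext y; rw [hb y]; rfl
    rw [hfun]
    refine HasFDerivAt.prodMk ?_ ?_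
    · exact (A.comp S2).hasFDerivAt
    · have h1 : HasFDerivAt
          (fun y : EuclideanSpace ℝ (Fin p) × EuclideanSpace ℝ (Fin p) => gradient U y.1)
          (H.comp F2) x := ((hgradU x.1).hasFDerivAt).comp x hasFDerivAt_fst
      exact (h1.neg).sub (K.comp S2).hasFDerivAt
  set D := ρ x • (-((fderiv ℝ U x.1).comp F2) - (innerSL ℝ (A x.2)).comp S2) with hD
  have hT : HasFDerivAt (fun y => ρ y • b y)
      (ρ x • ((A.comp S2).prod (-(H.comp F2) - K.comp S2)) + D.smulRight (b x)) x :=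
    (hρ' x).smul hbD
  -- coordinate computations
  have hAcoord : ∀ (v : EuclideanSpace ℝ (Fin p)) j, A v j = ∑ k, M⁻¹ j k * v k := by
    intro v j
    rw [hAapp, Matrix.toEuclideanLin_apply]
    simp [Matrix.mulVec, dotProduct]
  have hAe : ∀ i j, A (EuclideanSpace.single i 1) j = M⁻¹ j i := by
    intro i j
    rw [hAcoord]
    simp [EuclideanSpace.single_apply, mul_ite]
  have hKA : ∀ (v : EuclideanSpace ℝ (Fin p)) i, K v i = ∑ j, C i j * A v j := by
    intro v i
    rw [hKapp, Matrix.toEuclideanLin_apply]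
    have : (C * M⁻¹) *ᵥ (WithLp.ofLp v) = C *ᵥ (M⁻¹ *ᵥ (WithLp.ofLp v)) :=
      (Matrix.mulVec_mulVec _ _ _).symm
    rw [this]
    simp only [PiLp.toLp_apply, Matrix.mulVec, dotProduct]
    refine Finset.sum_congr rfl fun j _ => ?_
    rw [hAcoord]
  have hinner_right : ∀ (v : EuclideanSpace ℝ (Fin p)) k,
      ⟪v, EuclideanSpace.single k (1:ℝ)⟫ = v k := by
    intro v k
    rw [EuclideanSpace.inner_single_right]
    simp
  have hgradcoord : ∀ i, (gradient U x.1) i = fderiv ℝ U x.1 (EuclideanSpace.single i 1) := by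
    intro i
    rw [← hinner_right (gradient U x.1) i]
    exact InnerProductSpace.toDual_symm_apply
  -- the RHS second derivative
  have hrhs : ∀ j i,
      fderiv ℝ (fun y : EuclideanSpace ℝ (Fin p) × EuclideanSpace ℝ (Fin p) =>
        fderiv ℝ ρ y (0, EuclideanSpace.single j (1:ℝ))) x (0, EuclideanSpace.single i (1:ℝ))
      = ρ x * (A x.2 i * A x.2 j) - ρ x * M⁻¹ j i := by
    intro j i
    have hfe : (fun y : EuclideanSpace ℝ (Fin p) × EuclideanSpace ℝ (Fin p) =>
        fderiv ℝ ρ y (0, EuclideanSpace.single j (1:ℝ)))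
        = fun y => -(ρ y * ⟪A y.2, EuclideanSpace.single j (1:ℝ)⟫) := by
      funext y
      rw [(hρ' y).fderiv]
      simp [hF2, hS2]
    rw [hfe]
    have hinnerD : HasFDerivAt
        (fun y : EuclideanSpace ℝ (Fin p) × EuclideanSpace ℝ (Fin p) =>
          ⟪A y.2, EuclideanSpace.single j (1:ℝ)⟫)
        ((fderivInnerCLM ℝ (A x.2, EuclideanSpace.single j (1:ℝ))).comp
          ((A.comp S2).prod 0)) x :=
      ((A.comp S2).hasFDerivAt).inner ℝ (hasFDerivAt_const _ _)
    have hg : HasFDerivAt (fun y : EuclideanSpace ℝ (Fin p) × EuclideanSpace ℝ (Fin p) =>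
        -(ρ y * ⟪A y.2, EuclideanSpace.single j (1:ℝ)⟫)) _ x := ((hρ' x).mul hinnerD).neg
    rw [hg.fderiv]
    simp only [ContinuousLinearMap.neg_apply, ContinuousLinearMap.add_apply,
      ContinuousLinearMap.smul_apply, ContinuousLinearMap.comp_apply,
      ContinuousLinearMap.prod_apply, ContinuousLinearMap.coe_fst',
      ContinuousLinearMap.coe_snd', ContinuousLinearMap.sub_apply,
      ContinuousLinearMap.zero_apply, fderivInnerCLM_apply, smul_eq_mul, hF2, hS2]
    rw [hinner_right, hinner_right, hAe]
    simp only [innerSL_apply_apply]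
    rw [hinner_right]
    simp only [inner_zero_right, map_zero]
    ring
  -- now the LHS
  rw [hT.fderiv, trace_prod_formula]
  have hL1 : ∀ i : Fin p,
      (((ρ x • (A.comp S2).prod (-H.comp F2 - K.comp S2) + D.smulRight (b x)).toLinearMap)
        (EuclideanSpace.single i 1, 0)).1 i
      = -(ρ x * fderiv ℝ U x.1 (EuclideanSpace.single i 1) * A x.2 i) := by
    intro i
    simp only [ContinuousLinearMap.coe_coe, ContinuousLinearMap.add_apply,
      ContinuousLinearMap.smul_apply, ContinuousLinearMap.smulRight_apply,
      ContinuousLinearMap.prod_apply, ContinuousLinearMap.comp_apply,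
      ContinuousLinearMap.coe_fst', ContinuousLinearMap.coe_snd',
      ContinuousLinearMap.neg_apply, ContinuousLinearMap.sub_apply, hD, hF2, hS2,
      innerSL_apply_apply, map_zero, inner_zero_right, hb x,
      Prod.fst_add, Prod.smul_fst, PiLp.add_apply, PiLp.smul_apply, smul_eq_mul]
    rw [← hAapp]
    simp only [PiLp.zero_apply, mul_zero, zero_sub]
    ring
  have hL2 : ∀ i : Fin p,
      (((ρ x • (A.comp S2).prod (-H.comp F2 - K.comp S2) + D.smulRight (b x)).toLinearMap)
        (0, EuclideanSpace.single i 1)).2 i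
      = -(ρ x * K (EuclideanSpace.single i 1) i)
        + ρ x * A x.2 i * (fderiv ℝ U x.1 (EuclideanSpace.single i 1) + K x.2 i) := by
    intro i
    simp only [ContinuousLinearMap.coe_coe, ContinuousLinearMap.add_apply,
      ContinuousLinearMap.smul_apply, ContinuousLinearMap.smulRight_apply,
      ContinuousLinearMap.prod_apply, ContinuousLinearMap.comp_apply,
      ContinuousLinearMap.coe_fst', ContinuousLinearMap.coe_snd',
      ContinuousLinearMap.neg_apply, ContinuousLinearMap.sub_apply, hD, hF2, hS2,
      innerSL_apply_apply, map_zero, inner_zero_right, hb x,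
      Prod.snd_add, Prod.smul_snd, PiLp.add_apply, PiLp.smul_apply, PiLp.sub_apply,
      PiLp.neg_apply, smul_eq_mul]
    rw [hinner_right, hgradcoord i, ← hKapp]
    simp only [PiLp.neg_apply, PiLp.zero_apply, neg_zero, zero_sub, sub_zero]
    ring
  rw [Finset.sum_congr rfl (fun i _ => hL1 i), Finset.sum_congr rfl (fun i _ => hL2 i)]
  rw [← Finset.sum_add_distrib]
  simp only [hrhs, hKA, hAe]
  refine Finset.sum_congr rfl fun i _ => ?_
  have hsplit : ∑ j : Fin p, C i j * (ρ x * (A x.2 i * A x.2 j) - ρ x * M⁻¹ j i)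
      = (∑ j : Fin p, ρ x * A x.2 i * (C i j * A x.2 j))
        - ∑ j : Fin p, ρ x * (C i j * M⁻¹ j i) := by
    rw [← Finset.sum_sub_distrib]
    exact Finset.sum_congr rfl fun j _ => by ring
  rw [hsplit, ← Finset.mul_sum, ← Finset.mul_sum]
  ring
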